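/- Let M ∈ ℚ[[X, U]] be the two-variable formal power series whose coefficient of X^n U^k is the number of bicolored Motzkin paths of length n with exactly k steps in {U, O1}, and let W ∈ ℚ[[X, U]] be the series whose coefficient of X^n U^k is the number of bilateral Motzkin paths of length n with exactly k steps in {U, O1}. Then W satisfies the functional equation W = 1 + (X + X·U)·W + 2·U·X²·M·W. -/

import Mathlib

/-- The four kinds of steps: up, down, and two colors of horizontal steps. -/
inductive Step where
  | U : Step
  | D : Step
  | O1 : Step
  | O2 : Step
deriving DecidableEq

instance : Fintype Step :=
  ⟨{Step.U, Step.D, Step.O1, Step.O2}, by intro x; cases x <;> simp⟩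

/-- Weight of a step: U has weight 1, D has weight −1, O1 and O2 weight 0. -/
def Step.wt : Step → ℤ
  | .U => 1
  | .D => -1
  | .O1 => 0
  | .O2 => 0

/-- Height of a step word after its first `i` steps. -/
def stepHeight {n : ℕ} (r : Fin n → Step) (i : ℕ) : ℤ :=
  ∑ j ∈ Finset.univ.filter (fun j : Fin n => (j : ℕ) < i), (r j).wt

/-- Partial sum of a `±1`-sequence after its first `i` entries. -/
def partialSum {n : ℕ} (p : Fin n → ℤ) (i : ℕ) : ℤ :=
  ∑ j ∈ Finset.univ.filter (fun j : Fin n => (j : ℕ) < i), p j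

/-- Number of bicolored Motzkin paths of length `n` with exactly `k` steps in
`{U, O1}`: step words staying weakly above the axis and ending at height 0. -/
noncomputable def bicoloredMotzkinCount (n k : ℕ) : ℕ :=
  Nat.card {r : Fin n → Step //
    (∀ i ∈ Finset.range n, 0 ≤ stepHeight r (i + 1)) ∧
    stepHeight r n = 0 ∧
    (Finset.univ.filter fun i => r i = Step.U ∨ r i = Step.O1).card = k}

/-- Number of bilateral Motzkin paths of length `n` with exactly `k` steps in
`{U, O1}`: step words ending at height 0. -/
noncomputable def bilateralMotzkinCount (n k : ℕ) : ℕ :=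
  Nat.card {r : Fin n → Step //
    stepHeight r n = 0 ∧
    (Finset.univ.filter fun i => r i = Step.U ∨ r i = Step.O1).card = k}

/-- The generating function `M ∈ ℚ[[X,U]]` of bicolored Motzkin paths
(variable 0 is `X`, marking the length; variable 1 is `U`, marking the number
of steps in `{U, O1}`). -/
noncomputable def Mser : MvPowerSeries (Fin 2) ℚ :=
  fun d => (bicoloredMotzkinCount (d 0) (d 1) : ℚ)

/-- The generating function `W ∈ ℚ[[X,U]]` of bilateral Motzkin paths
(variable 0 is `X`, marking the length; variable 1 is `U`, marking the number
of steps in `{U, O1}`). -/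
noncomputable def Wser : MvPowerSeries (Fin 2) ℚ :=
  fun d => (bilateralMotzkinCount (d 0) (d 1) : ℚ)

/-!
A nonempty bilateral path starts with `O2` or `O1`, followed by a bilateral path, or with `U` or
`D`. After a first step `U` the rest has height `-1`, and cutting it just before its first step
below the axis writes it uniquely as `m D w` with `m` a bicolored Motzkin path and `w` bilateral;
this gives `XU · M · X · W`. Swapping `U` and `D` maps the paths starting with `U` onto those
starting with `D`, and on words of height `0` it preserves the number of steps in `{U, O1}`, which
accounts for the factor `2`. Disjoint unions of languages add generating functions and unambiguous
concatenations multiply them.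
-/

section WordGF

open MvPowerSeries Finset

variable {α σ R : Type*} (ω : α → σ →₀ ℕ)

lemma Language.mem_singleton_mul {a : α} {L : Language α} {l : List α} :
    l ∈ {[a]} * L ↔ ∃ t ∈ L, l = a :: t := by
  constructor
  · rintro ⟨_, rfl, t, ht, rfl⟩
    exact ⟨t, ht, rfl⟩
  · rintro ⟨t, ht, rfl⟩
    exact ⟨[a], rfl, t, ht, rfl⟩

lemma Language.mem_map_of_involutive {f : α → α} (hf : Function.Involutive f) {L : Language α}
    {l : List α} : l ∈ Language.map f L ↔ l.map f ∈ L := by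
  have hinv : ∀ l : List α, (l.map f).map f = l := fun l => by
    rw [List.map_map, hf.comp_self, List.map_id]
  constructor
  · rintro ⟨a, ha, rfl⟩
    rwa [hinv]
  · exact fun h => ⟨_, h, hinv l⟩

lemma forall_prefix_iff_forall_take_succ (P : List α → Prop) (hP : P []) (l : List α) :
    (∀ p, p <+: l → P p) ↔ ∀ i < l.length, P (l.take (i + 1)) := by
  refine ⟨fun h i _ => h _ (List.take_prefix _ _), fun h p hp => ?_⟩
  rw [List.prefix_iff_eq_take.1 hp]
  rcases hk : p.length with _ | i
  · simpa using hP
  · exact h i (by have := hp.length_le; omega)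

noncomputable def wordWeight (l : List α) : σ →₀ ℕ := (l.map ω).sum

@[simp] lemma wordWeight_nil : wordWeight ω [] = 0 := rfl

@[simp] lemma wordWeight_cons (a : α) (l : List α) :
    wordWeight ω (a :: l) = ω a + wordWeight ω l := List.sum_cons

@[simp] lemma wordWeight_append (l m : List α) :
    wordWeight ω (l ++ m) = wordWeight ω l + wordWeight ω m := by
  simp [wordWeight]

lemma length_le_degree_wordWeight (hω : ∀ a, ω a ≠ 0) (l : List α) :
    l.length ≤ (wordWeight ω l).degree := by
  induction l with
  | nil => simp
  | cons a l ih =>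
    have : (ω a).degree ≠ 0 := (Finsupp.degree_eq_zero_iff _).not.2 (hω a)
    simp only [List.length_cons, wordWeight_cons, map_add]
    omega

lemma finite_setOf_wordWeight_eq [Finite α] (hω : ∀ a, ω a ≠ 0) (d : σ →₀ ℕ) :
    {l | wordWeight ω l = d}.Finite :=
  (List.finite_length_le α d.degree).subset fun l hl =>
    hl ▸ length_le_degree_wordWeight ω hω l

lemma finite_setOf_mem_and_wordWeight_eq [Finite α] (hω : ∀ a, ω a ≠ 0) (L : Language α)
    (d : σ →₀ ℕ) : {l | l ∈ L ∧ wordWeight ω l = d}.Finite :=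
  (finite_setOf_wordWeight_eq ω hω d).subset fun _ h => h.2

variable [CommSemiring R]

noncomputable def wordGF (L : Language α) : MvPowerSeries σ R :=
  fun d => {l | l ∈ L ∧ wordWeight ω l = d}.ncard

lemma coeff_wordGF (L : Language α) (d : σ →₀ ℕ) :
    coeff d (wordGF ω L : MvPowerSeries σ R) = {l | l ∈ L ∧ wordWeight ω l = d}.ncard :=
  rfl

lemma wordGF_singleton (w : List α) :
    wordGF ω {w} = (monomial (wordWeight ω w) 1 : MvPowerSeries σ R) := by
  classical
  ext d
  rw [coeff_wordGF, coeff_monomial]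
  have hfiber : {l | l ∈ ({w} : Language α) ∧ wordWeight ω l = d} =
      if d = wordWeight ω w then {w} else ∅ := by
    ext l
    change l = w ∧ _ ↔ _
    split_ifs <;> grind
  split_ifs at hfiber ⊢ <;> simp [hfiber]

lemma wordGF_one : wordGF ω 1 = (1 : MvPowerSeries σ R) :=
  wordGF_singleton ω []

lemma wordGF_add [Finite α] (hω : ∀ a, ω a ≠ 0) {L M : Language α} (h : Disjoint L M) :
    wordGF ω (L + M) = (wordGF ω L + wordGF ω M : MvPowerSeries σ R) := by
  ext d
  have hunion : {l | l ∈ L + M ∧ wordWeight ω l = d} =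
      {l | l ∈ L ∧ wordWeight ω l = d} ∪ {l | l ∈ M ∧ wordWeight ω l = d} := by
    ext l; simp [Language.mem_add, or_and_right]
  rw [map_add, coeff_wordGF, coeff_wordGF, coeff_wordGF, hunion,
    Set.ncard_union_eq _ (finite_setOf_mem_and_wordWeight_eq ω hω L d)
      (finite_setOf_mem_and_wordWeight_eq ω hω M d), Nat.cast_add]
  exact Set.disjoint_left.2 fun l hL hM => Set.disjoint_left.1 h hL.1 hM.1

lemma wordGF_mul [Finite α] (hω : ∀ a, ω a ≠ 0) {L M : Language α}
    (h : Set.InjOn (fun p : List α × List α => p.1 ++ p.2) {p | p.1 ∈ L ∧ p.2 ∈ M}) :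
    wordGF ω (L * M) = (wordGF ω L * wordGF ω M : MvPowerSeries σ R) := by
  classical
  ext d
  simp_rw [coeff_mul, coeff_wordGF, ← Nat.cast_mul, ← Nat.cast_sum, ← Nat.card_coe_set_eq]
  congr 1
  have := fun e => (finite_setOf_mem_and_wordWeight_eq ω hω L e).to_subtype
  have := fun e => (finite_setOf_mem_and_wordWeight_eq ω hω M e).to_subtype
  let split : (Σ p : antidiagonal d, {l | l ∈ L ∧ wordWeight ω l = p.1.1} ×
      {l | l ∈ M ∧ wordWeight ω l = p.1.2}) → {l | l ∈ L * M ∧ wordWeight ω l = d} :=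
    fun x => ⟨x.2.1.1 ++ x.2.2.1, Language.mem_mul.2 ⟨_, x.2.1.2.1, _, x.2.2.2.1, rfl⟩, by
      rw [wordWeight_append, x.2.1.2.2, x.2.2.2.2, mem_antidiagonal.1 x.1.2]⟩
  have hsplit : Function.Bijective split := by
    constructor
    · rintro ⟨p, ⟨a, ha⟩, ⟨b, hb⟩⟩ ⟨p', ⟨a', ha'⟩, ⟨b', hb'⟩⟩ heq
      obtain ⟨rfl, rfl⟩ := Prod.ext_iff.1 <| h (show (a, b) ∈ _ from ⟨ha.1, hb.1⟩)
        (show (a', b') ∈ _ from ⟨ha'.1, hb'.1⟩) (congrArg Subtype.val heq)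
      obtain rfl : p = p' := Subtype.ext (Prod.ext (ha.2.symm.trans ha'.2) (hb.2.symm.trans hb'.2))
      rfl
    · rintro ⟨l, hl, rfl⟩
      obtain ⟨a, ha, b, hb, rfl⟩ := Language.mem_mul.1 hl
      refine ⟨⟨⟨(wordWeight ω a, wordWeight ω b), ?_⟩, ⟨a, ha, rfl⟩, ⟨b, hb, rfl⟩⟩, rfl⟩
      exact mem_antidiagonal.2 (wordWeight_append ω a b).symm
  rw [← Nat.card_congr (Equiv.ofBijective split hsplit), Nat.card_sigma,
    ← Finset.sum_coe_sort (antidiagonal d)]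
  simp_rw [Nat.card_prod]

lemma wordGF_singleton_mul [Finite α] (hω : ∀ a, ω a ≠ 0) (a : α) (L : Language α) :
    wordGF ω ({[a]} * L) = (monomial (ω a) 1 * wordGF ω L : MvPowerSeries σ R) := by
  rw [wordGF_mul ω hω, wordGF_singleton, wordWeight_cons, wordWeight_nil, add_zero]
  rintro ⟨_, b⟩ ⟨rfl, -⟩ ⟨_, b'⟩ ⟨rfl, -⟩ h
  simpa using h

lemma wordGF_map {β : Type*} (ω' : β → σ →₀ ℕ) {f : α → β}
    (hf : Function.Injective f) {L : Language α}
    (hL : ∀ l ∈ L, wordWeight ω' (l.map f) = wordWeight ω l) :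
    wordGF ω' (Language.map f L) = (wordGF ω L : MvPowerSeries σ R) := by
  ext d
  have himage : {l | l ∈ Language.map f L ∧ wordWeight ω' l = d} =
      List.map f '' {l | l ∈ L ∧ wordWeight ω l = d} := by
    ext l
    constructor
    · rintro ⟨⟨a, ha, rfl⟩, hd⟩
      exact ⟨a, ⟨ha, (hL a ha).symm.trans hd⟩, rfl⟩
    · rintro ⟨a, ⟨ha, hd⟩, rfl⟩
      exact ⟨⟨a, ha, rfl⟩, (hL a ha).trans hd⟩
  rw [coeff_wordGF, coeff_wordGF, himage,
    Set.ncard_image_of_injective _ (List.map_injective_iff.2 hf)]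

end WordGF

section Paths

def Step.mark : Step → ℕ
  | .U => 1
  | .D => 0
  | .O1 => 1
  | .O2 => 0

noncomputable def Step.weight (s : Step) : Fin 2 →₀ ℕ :=
  Finsupp.single 0 1 + Finsupp.single 1 s.mark

def Step.reflect : Step → Step
  | .U => .D
  | .D => .U
  | .O1 => .O1
  | .O2 => .O2

lemma Step.weight_ne_zero (s : Step) : s.weight ≠ 0 :=
  fun h => by simpa [Step.weight] using DFunLike.congr_fun h 0

lemma Step.reflect_involutive : Function.Involutive Step.reflect := by
  intro s; cases s <;> rfl

def wordHeight (l : List Step) : ℤ := (l.map Step.wt).sum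

@[simp] lemma wordHeight_nil : wordHeight [] = 0 := rfl

@[simp] lemma wordHeight_cons (s : Step) (l : List Step) :
    wordHeight (s :: l) = s.wt + wordHeight l := List.sum_cons

@[simp] lemma wordHeight_append (l m : List Step) :
    wordHeight (l ++ m) = wordHeight l + wordHeight m := by
  simp [wordHeight]

lemma wordHeight_map_reflect (l : List Step) : wordHeight (l.map Step.reflect) = -wordHeight l := by
  induction l with
  | nil => rfl
  | cons s l ih => cases s <;> simp [ih, Step.reflect, Step.wt] <;> ring

lemma wordWeight_step_apply_zero (l : List Step) : wordWeight Step.weight l 0 = l.length := by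
  induction l with
  | nil => rfl
  | cons s l ih => simp [ih, Step.weight, add_comm]

lemma wordWeight_step_apply_one (l : List Step) :
    wordWeight Step.weight l 1 = (l.map Step.mark).sum := by
  induction l with
  | nil => rfl
  | cons s l ih => simp [ih, Step.weight]

lemma wordWeight_step_eq_iff (l : List Step) (d : Fin 2 →₀ ℕ) :
    wordWeight Step.weight l = d ↔ l.length = d 0 ∧ (l.map Step.mark).sum = d 1 := by
  rw [Finsupp.ext_iff, Fin.forall_fin_two, wordWeight_step_apply_zero, wordWeight_step_apply_one]

lemma mark_sum_map_reflect (l : List Step) :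
    (((l.map Step.reflect).map Step.mark).sum : ℤ) = (l.map Step.mark).sum - wordHeight l := by
  induction l with
  | nil => rfl
  | cons s l ih =>
    cases s <;> simp only [List.map_cons, List.sum_cons, Nat.cast_add, ih, wordHeight_cons] <;>
      simp [Step.reflect, Step.mark, Step.wt] <;> ring

lemma wordWeight_map_reflect {l : List Step} (hl : wordHeight l = 0) :
    wordWeight Step.weight (l.map Step.reflect) = wordWeight Step.weight l := by
  have := mark_sum_map_reflect l
  rw [hl, sub_zero, Nat.cast_inj] at this
  rw [wordWeight_step_eq_iff, List.length_map, wordWeight_step_apply_zero,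
    wordWeight_step_apply_one, this]
  exact ⟨rfl, rfl⟩

end Paths

section FirstReturn

def bilateralPaths : Language Step := {l | wordHeight l = 0}

def motzkinPaths : Language Step :=
  {l | (∀ p, p <+: l → 0 ≤ wordHeight p) ∧ wordHeight l = 0}

lemma mem_bilateralPaths {l : List Step} : l ∈ bilateralPaths ↔ wordHeight l = 0 := Iff.rfl

lemma mem_motzkinPaths {l : List Step} :
    l ∈ motzkinPaths ↔ (∀ p, p <+: l → 0 ≤ wordHeight p) ∧ wordHeight l = 0 := Iff.rfl

-- The shortest prefix of negative height is `m ++ [D]` with `m` a Motzkin path.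
lemma exists_motzkinPaths_append_down {t : List Step} (h : ∃ p, p <+: t ∧ wordHeight p < 0) :
    ∃ m ∈ motzkinPaths, ∃ w, t = m ++ .D :: w := by
  induction t using List.reverseRecOn with
  | nil =>
    obtain ⟨p, hp, hneg⟩ := h
    simp [List.prefix_nil.1 hp] at hneg
  | append_singleton t s ih =>
    by_cases ht : ∃ p, p <+: t ∧ wordHeight p < 0
    · obtain ⟨m, hm, w, rfl⟩ := ih ht
      exact ⟨m, hm, w ++ [s], by simp⟩
    push Not at ht
    obtain ⟨p, hp, hneg⟩ := h
    rcases List.prefix_concat_iff.1 hp with rfl | hp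
    · have ht0 := ht t (List.prefix_refl t)
      obtain ⟨htop, rfl⟩ : wordHeight t = 0 ∧ s = .D := by
        cases s <;> simp [Step.wt] at hneg ⊢ <;> omega
      exact ⟨t, ⟨ht, htop⟩, [], rfl⟩
    · exact absurd hneg (not_lt.2 (ht p hp))

lemma mem_motzkinPaths_mul_down_mul_iff {t : List Step} :
    t ∈ motzkinPaths * ({[.D]} * bilateralPaths) ↔ wordHeight t = -1 := by
  constructor
  · rintro ⟨m, hm, _, hb, rfl⟩
    obtain ⟨w, hw, rfl⟩ := Language.mem_singleton_mul.1 hb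
    simp [hm.2, Step.wt, mem_bilateralPaths.1 hw]
  · intro ht
    obtain ⟨m, hm, w, rfl⟩ :=
      exists_motzkinPaths_append_down ⟨t, List.prefix_refl t, by omega⟩
    refine Language.mem_mul.2 ⟨m, hm, .D :: w, ?_, rfl⟩
    refine Language.mem_singleton_mul.2 ⟨w, ?_, rfl⟩
    simp [hm.2, Step.wt] at ht
    exact mem_bilateralPaths.2 (by omega)

-- A shorter Motzkin factor `m` would make `m ++ [D]`, of height `-1`, a prefix of the longer one.
lemma motzkinPaths_append_down_inj {m m' w w' : List Step} (hm : m ∈ motzkinPaths)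
    (hm' : m' ∈ motzkinPaths) (h : m ++ .D :: w = m' ++ .D :: w') : m = m' := by
  wlog hle : m.length ≤ m'.length generalizing m m' w w'
  · exact (this hm' hm h.symm (by omega)).symm
  rcases hle.lt_or_eq with hlt | hlen
  · have hpre : m ++ [.D] <+: m' := List.prefix_of_prefix_length_le
      (l₃ := m ++ .D :: w) (by simp) (h ▸ List.prefix_append _ _) (by simpa using hlt)
    have := hm'.1 _ hpre
    simp [hm.2, Step.wt] at this
  · exact (List.append_inj h hlen).1

lemma injOn_append_motzkinPaths_down_mul :
    Set.InjOn (fun p : List Step × List Step => p.1 ++ p.2)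
      {p | p.1 ∈ motzkinPaths ∧ p.2 ∈ {[.D]} * bilateralPaths} := by
  rintro ⟨m, _⟩ ⟨hm, hw⟩ ⟨m', _⟩ ⟨hm', hw'⟩ h
  obtain ⟨w, -, rfl⟩ := Language.mem_singleton_mul.1 hw
  obtain ⟨w', -, rfl⟩ := Language.mem_singleton_mul.1 hw'
  obtain rfl := motzkinPaths_append_down_inj hm hm' h
  simpa using h

end FirstReturn

section Decomposition

def pathsStartingUp : Language Step := {[.U]} * (motzkinPaths * ({[.D]} * bilateralPaths))

lemma mem_pathsStartingUp {l : List Step} :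
    l ∈ pathsStartingUp ↔ ∃ t, wordHeight t = -1 ∧ l = .U :: t := by
  simp only [pathsStartingUp, Language.mem_singleton_mul, mem_motzkinPaths_mul_down_mul_iff]

lemma bilateralPaths_eq :
    bilateralPaths = 1 + {[.O2]} * bilateralPaths + {[.O1]} * bilateralPaths + pathsStartingUp +
      Language.map Step.reflect pathsStartingUp := by
  refine Language.ext fun l => ?_
  rcases l with _ | ⟨s, t⟩
  · simp [Language.mem_add, Language.mem_one, Language.mem_singleton_mul,
      Language.mem_map_of_involutive Step.reflect_involutive, mem_pathsStartingUp,
      mem_bilateralPaths]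
  · cases s <;> simp [Language.mem_add, Language.mem_one, Language.mem_singleton_mul,
      Language.mem_map_of_involutive Step.reflect_involutive, mem_pathsStartingUp,
      mem_bilateralPaths, wordHeight_map_reflect, Step.reflect, Step.wt] <;> omega

end Decomposition

section GeneratingFunctions

open MvPowerSeries

lemma stepHeight_eq_wordHeight_take {n : ℕ} (r : Fin n → Step) (i : ℕ) :
    stepHeight r i = wordHeight ((List.ofFn r).take i) := by
  rw [wordHeight, List.map_take, List.map_ofFn, List.sum_take_ofFn]
  rfl

lemma card_filter_eq_sum_mark {n : ℕ} (r : Fin n → Step) :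
    (Finset.univ.filter fun i => r i = .U ∨ r i = .O1).card =
      ((List.ofFn r).map Step.mark).sum := by
  rw [List.map_ofFn, List.sum_ofFn, Finset.card_filter]
  refine Finset.sum_congr rfl fun i _ => ?_
  rw [Function.comp_apply]
  cases r i <;> simp [Step.mark]

lemma ncard_setOf_ofFn_mem (L : Language Step) (d : Fin 2 →₀ ℕ) :
    {r : Fin (d 0) → Step | List.ofFn r ∈ L ∧
      (Finset.univ.filter fun i => r i = .U ∨ r i = .O1).card = d 1}.ncard =
    {l | l ∈ L ∧ wordWeight Step.weight l = d}.ncard := by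
  rw [← Set.ncard_image_of_injective _ List.ofFn_injective]
  congr 1
  ext l
  simp only [Set.mem_image, Set.mem_ofPred_eq, wordWeight_step_eq_iff, card_filter_eq_sum_mark]
  constructor
  · rintro ⟨r, ⟨hL, hk⟩, rfl⟩
    exact ⟨hL, List.length_ofFn, hk⟩
  · rintro ⟨hL, hn, hk⟩
    obtain ⟨r, rfl⟩ : ∃ r : Fin (d 0) → Step, List.ofFn r = l :=
      ⟨fun i => l[i.val], List.ext_getElem (by simp [hn]) (by simp)⟩
    exact ⟨r, ⟨hL, hk⟩, rfl⟩

lemma Wser_eq_wordGF : Wser = wordGF Step.weight bilateralPaths := by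
  ext d
  rw [coeff_wordGF, ← ncard_setOf_ofFn_mem, ← Nat.card_coe_set_eq]
  refine congrArg Nat.cast (Nat.card_congr (Equiv.subtypeEquivRight fun r => ?_))
  rw [stepHeight_eq_wordHeight_take, List.take_of_length_le (by simp)]
  rfl

lemma Mser_eq_wordGF : Mser = wordGF Step.weight motzkinPaths := by
  ext d
  rw [coeff_wordGF, ← ncard_setOf_ofFn_mem, ← Nat.card_coe_set_eq]
  refine congrArg Nat.cast (Nat.card_congr (Equiv.subtypeEquivRight fun r => ?_))
  rw [Set.mem_ofPred_eq, mem_motzkinPaths,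
    forall_prefix_iff_forall_take_succ (fun p => 0 ≤ wordHeight p) le_rfl]
  simp only [stepHeight_eq_wordHeight_take, List.length_ofFn, Finset.mem_range,
    List.take_of_length_le (le_of_eq (List.length_ofFn (f := r))), and_assoc]

lemma monomial_step_weight {R : Type*} [CommSemiring R] (s : Step) :
    (monomial s.weight 1 : MvPowerSeries (Fin 2) R) = X 0 * X 1 ^ s.mark := by
  rw [X_pow_eq, X_def, monomial_mul_monomial, mul_one, Step.weight]

lemma wordGF_pathsStartingUp {R : Type*} [CommSemiring R] :
    (wordGF Step.weight pathsStartingUp : MvPowerSeries (Fin 2) R) =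
      X 0 * X 1 *
        (wordGF Step.weight motzkinPaths * (X 0 * wordGF Step.weight bilateralPaths)) := by
  rw [pathsStartingUp, wordGF_singleton_mul _ Step.weight_ne_zero,
    wordGF_mul _ Step.weight_ne_zero injOn_append_motzkinPaths_down_mul,
    wordGF_singleton_mul _ Step.weight_ne_zero, monomial_step_weight, monomial_step_weight]
  simp [Step.mark]

end GeneratingFunctions

open MvPowerSeries in
/-- First-return functional equation for bilateral Motzkin paths:
`W = 1 + (X + X·U)·W + 2·U·X²·M·W`. -/
theorem Wser_functional_equation :
    Wser = 1 + (X 0 + X 0 * X 1) * Wser + 2 * X 1 * (X 0) ^ 2 * Mser * Wser := by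
  have hω := Step.weight_ne_zero
  have hreflect : ∀ l ∈ pathsStartingUp,
      wordWeight Step.weight (l.map Step.reflect) = wordWeight Step.weight l := by
    intro l hl
    obtain ⟨t, ht, rfl⟩ := mem_pathsStartingUp.1 hl
    exact wordWeight_map_reflect (by simp [ht, Step.wt])
  rw [Wser_eq_wordGF, Mser_eq_wordGF]
  conv_lhs => rw [bilateralPaths_eq]
  rw [wordGF_add _ hω, wordGF_add _ hω, wordGF_add _ hω, wordGF_add _ hω, wordGF_one,
    wordGF_singleton_mul _ hω, wordGF_singleton_mul _ hω,
    wordGF_map _ _ Step.reflect_involutive.injective hreflect, wordGF_pathsStartingUp,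
    monomial_step_weight, monomial_step_weight]
  · simp only [Step.mark]
    ring
  -- the summands are told apart by their first step
  all_goals
    refine Set.disjoint_left.2 fun l (h1 : l ∈ (_ : Language Step))
      (h2 : l ∈ (_ : Language Step)) => ?_
    rcases l with _ | ⟨s, t⟩ <;>
      simp [Language.mem_add, Language.mem_one, Language.mem_singleton_mul,
        Language.mem_map_of_involutive Step.reflect_involutive, mem_pathsStartingUp] at h1 h2 <;>
      cases s <;> simp_all [Step.reflect]
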